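/- Let H₀, H = H₀ + V be bounded self-adjoint operators on a separable Hilbert space with V ∈ B₂(H), and let P_n be finite-rank projections with ‖(I−P_n)H₀P_n‖₂ → 0, ‖(I−P_n)HP_n‖₂ → 0, ‖(I−P_n)V‖₂ → 0. Then for every polynomial p, Tr(p(H) − p(H₀) − Dp(H₀)·V) = lim_n Tr(P_n[p(P_nHP_n) − p(P_nH₀P_n) − Dp(P_nH₀P_n)·(P_nVP_n)]P_n). -/

import Mathlib

/-!
For `a = PₙHPₙ, b = PₙH₀Pₙ` as well as for `a = H, b = H₀`,
`p(a) − p(b) − Dp(b)(a − b) = ∑ᵣ cᵣ ∑_{j<r} (a^{r−1−j} − b^{r−1−j}) · (a − b) b^j`,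
and for the compressions this operator is unchanged by `Pₙ · Pₙ`. Each summand is a product
`S T` of two Hilbert–Schmidt operators, whose trace along `bas` is the ℓ²-inner product of the
families `(S* bas i)ᵢ` and `(T bas i)ᵢ`; hence it is continuous in Hilbert–Schmidt norm, and it
suffices that `PₙVPₙ (PₙH₀Pₙ)^j → V H₀^j` and `(PₙHPₙ)^k − (PₙH₀Pₙ)^k → H^k − H₀^k` in that
norm. Taking adjoints and telescoping reduces both to `(PₙBPₙ)^j PₙVPₙ → B^j V` for
`B = H, H₀`, which follows by induction on `j`: the errors are the defects `(1 − Pₙ)BPₙ` and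
`(1 − Pₙ)V`, which tend to `0` by hypothesis, multiplied by uniformly bounded operators.
-/

/-- `T` is Hilbert–Schmidt (w.r.t. the Hilbert basis `bas`). -/
def IsHS {𝓗 : Type*} [NormedAddCommGroup 𝓗] [InnerProductSpace ℂ 𝓗] [CompleteSpace 𝓗]
    {ι : Type*} (bas : HilbertBasis ι ℂ 𝓗) (T : 𝓗 →L[ℂ] 𝓗) : Prop :=
  Summable fun i => ‖T (bas i)‖ ^ 2

/-- The Hilbert–Schmidt norm of `T` (w.r.t. the Hilbert basis `bas`). -/
noncomputable def hsNorm {𝓗 : Type*} [NormedAddCommGroup 𝓗] [InnerProductSpace ℂ 𝓗]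
    [CompleteSpace 𝓗] {ι : Type*} (bas : HilbertBasis ι ℂ 𝓗) (T : 𝓗 →L[ℂ] 𝓗) : ℝ :=
  Real.sqrt (∑' i, ‖T (bas i)‖ ^ 2)

/-- The trace of `T` computed along the Hilbert basis `bas` (basis-independent for trace-class
operators). -/
noncomputable def traceAlong {𝓗 : Type*} [NormedAddCommGroup 𝓗] [InnerProductSpace ℂ 𝓗]
    [CompleteSpace 𝓗] {ι : Type*} (bas : HilbertBasis ι ℂ 𝓗) (T : 𝓗 →L[ℂ] 𝓗) : ℂ :=
  ∑' i, @inner ℂ _ _ (bas i) (T (bas i))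

/-- The Fréchet derivative of a polynomial `p` at `H₀` applied to `V`:
for `p = ∑_r c_r λ^r`, `Dp(H₀)·V = ∑_r c_r ∑_{j<r} H₀^{r−j−1} V H₀^j`. -/
noncomputable def polyDeriv {𝓗 : Type*} [NormedAddCommGroup 𝓗] [InnerProductSpace ℂ 𝓗]
    [CompleteSpace 𝓗] (p : Polynomial ℂ) (H₀ V : 𝓗 →L[ℂ] 𝓗) : 𝓗 →L[ℂ] 𝓗 :=
  ∑ r ∈ p.support, p.coeff r • ∑ j ∈ Finset.range r, H₀ ^ (r - j - 1) * V * H₀ ^ j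

open ContinuousLinearMap Filter Topology

lemma HilbertBasis.hasSum_norm_inner_sq {𝕜 E ι : Type*} [RCLike 𝕜] [NormedAddCommGroup E]
    [InnerProductSpace 𝕜 E] (b : HilbertBasis ι 𝕜 E) (x : E) :
    HasSum (fun i => ‖inner 𝕜 (b i) x‖ ^ 2) (‖x‖ ^ 2) := by
  have h := b.hasSum_inner_mul_inner x x
  rw [inner_self_eq_norm_sq_to_K, ← RCLike.ofReal_pow] at h
  refine (RCLike.hasSum_ofReal 𝕜).1 (h.congr_fun fun i => ?_)
  rw [← inner_conj_symm x, RCLike.conj_mul, RCLike.ofReal_pow]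

lemma HilbertBasis.enorm_sq_eq_tsum {𝕜 E ι : Type*} [RCLike 𝕜] [NormedAddCommGroup E]
    [InnerProductSpace 𝕜 E] (b : HilbertBasis ι 𝕜 E) (x : E) :
    ‖x‖ₑ ^ 2 = ∑' i, ‖inner 𝕜 (b i) x‖ₑ ^ 2 := by
  simp only [← ofReal_norm, ← ENNReal.ofReal_pow (norm_nonneg _)]
  have h := b.hasSum_norm_inner_sq x
  rw [← h.tsum_eq, ENNReal.ofReal_tsum_of_nonneg (fun _ => by positivity) h.summable]

lemma ContinuousLinearMap.norm_mul_apply_sq_le {𝕜 E : Type*} [NontriviallyNormedField 𝕜]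
    [SeminormedAddCommGroup E] [NormedSpace 𝕜 E] (S T : E →L[𝕜] E) (x : E) :
    ‖(S * T) x‖ ^ 2 ≤ ‖S‖ ^ 2 * ‖T x‖ ^ 2 := by
  rw [← mul_pow]
  exact pow_le_pow_left₀ (norm_nonneg _) (S.le_opNorm _) 2

lemma ContinuousLinearMap.norm_pow_le_of_norm_le {𝕜 E : Type*} [NontriviallyNormedField 𝕜]
    [SeminormedAddCommGroup E] [NormedSpace 𝕜 E] {T : E →L[𝕜] E} {M : ℝ} (hT : ‖T‖ ≤ M)
    (j : ℕ) : ‖T ^ j‖ ≤ M ^ j := by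
  induction j with
  | zero => simpa [one_def] using norm_id_le
  | succ j ih =>
    rw [pow_succ, pow_succ]
    exact (norm_mul_le _ _).trans (mul_le_mul ih hT (norm_nonneg _) ((norm_nonneg _).trans ih))

lemma IsStarProjection.norm_mul_le {E : Type*} [NonUnitalNormedRing E] [StarRing E] [CStarRing E]
    {p : E} (hp : IsStarProjection p) (x : E) : ‖p * x‖ ≤ ‖x‖ :=
  (_root_.norm_mul_le _ _).trans (mul_le_of_le_one_left (norm_nonneg _) (hp.norm_le p))

lemma IsStarProjection.norm_mul_mul_le {E : Type*} [NonUnitalNormedRing E] [StarRing E]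
    [CStarRing E] {p : E} (hp : IsStarProjection p) (x : E) : ‖p * x * p‖ ≤ ‖x‖ :=
  (_root_.norm_mul_le _ _).trans <|
    (mul_le_of_le_one_right (norm_nonneg _) (hp.norm_le p)).trans (hp.norm_mul_le x)

lemma pow_sub_pow_eq_sum {R : Type*} [Ring R] (a b : R) (r : ℕ) :
    a ^ r - b ^ r = ∑ j ∈ Finset.range r, a ^ (r - 1 - j) * (a - b) * b ^ j := by
  have h := Finset.sum_range_sub' (fun j => a ^ (r - j) * b ^ j) r
  simp only [Nat.sub_zero, Nat.sub_self, pow_zero, mul_one, one_mul] at h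
  rw [← h]
  refine Finset.sum_congr rfl fun j hj => ?_
  obtain ⟨m, rfl⟩ := Nat.exists_eq_add_of_lt (Finset.mem_range.1 hj)
  rw [show j + m + 1 - j = m + 1 by omega, show j + m + 1 - (j + 1) = m by omega,
    show j + m + 1 - 1 - j = m by omega, pow_succ, pow_succ']
  noncomm_ring

lemma mul_pow_sub_pow_mul_mul_pow_mul {R : Type*} [Ring R] {e x y : R} (hx : e * x = x)
    (hxe : x * e = x) (hy : e * y = y) (hye : y * e = y) (k j : ℕ) :
    e * ((x ^ k - y ^ k) * ((x - y) * y ^ j)) * e = (x ^ k - y ^ k) * ((x - y) * y ^ j) := by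
  have hleft : e * (x ^ k - y ^ k) = x ^ k - y ^ k := by
    cases k with
    | zero => simp
    | succ k => rw [pow_succ', pow_succ', mul_sub, ← mul_assoc, ← mul_assoc, hx, hy]
  have hright : (x - y) * y ^ j * e = (x - y) * y ^ j := by
    have hc : Commute y e := hye.trans hy.symm
    rw [mul_assoc, (hc.pow_left j).eq, ← mul_assoc, sub_mul, hxe, hye]
  calc _ = e * (x ^ k - y ^ k) * ((x - y) * y ^ j * e) := by simp only [mul_assoc]
    _ = _ := by rw [hleft, hright]

lemma Polynomial.aeval_eq_sum_support {R A : Type*} [CommSemiring R] [Semiring A] [Algebra R A]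
    (a : A) (p : Polynomial R) : Polynomial.aeval a p = ∑ r ∈ p.support, p.coeff r • a ^ r := by
  rw [Polynomial.aeval_def, Polynomial.eval₂_eq_sum, Polynomial.sum_def]
  exact Finset.sum_congr rfl fun r _ => (Algebra.smul_def _ _).symm

section HilbertSchmidt

variable {𝓗 : Type*} [NormedAddCommGroup 𝓗] [InnerProductSpace ℂ 𝓗] [CompleteSpace 𝓗]
  {ι : Type*} {bas : HilbertBasis ι ℂ 𝓗}

variable (bas) in
/-- Reordering the double series of matrix coefficients is free in `ℝ≥0∞`. -/
lemma tsum_enorm_sq_star (T : 𝓗 →L[ℂ] 𝓗) :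
    ∑' i, ‖star T (bas i)‖ₑ ^ 2 = ∑' i, ‖T (bas i)‖ₑ ^ 2 := by
  calc ∑' i, ‖star T (bas i)‖ₑ ^ 2
      = ∑' i, ∑' j, ‖inner ℂ (bas j) (star T (bas i))‖ₑ ^ 2 := by
        simp only [bas.enorm_sq_eq_tsum]
    _ = ∑' j, ∑' i, ‖inner ℂ (bas i) (T (bas j))‖ₑ ^ 2 := by
        rw [ENNReal.tsum_comm]
        refine tsum_congr fun j => tsum_congr fun i => ?_
        rw [star_eq_adjoint, adjoint_inner_right, ← enorm_norm, norm_inner_symm, enorm_norm]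
    _ = ∑' i, ‖T (bas i)‖ₑ ^ 2 := by
        simp only [bas.enorm_sq_eq_tsum]

variable (bas) in
lemma isHS_iff_tsum_enorm_sq_ne_top {T : 𝓗 →L[ℂ] 𝓗} :
    IsHS bas T ↔ ∑' i, ‖T (bas i)‖ₑ ^ 2 ≠ ⊤ := by
  have h := tsum_enorm_ne_top_iff_summable_norm (f := fun i => ‖T (bas i)‖ ^ 2)
  simp only [enorm_pow, enorm_norm, Real.norm_eq_abs, abs_pow, abs_norm] at h
  exact h.symm

variable (bas) in
lemma hsNorm_eq_sqrt_toReal (T : 𝓗 →L[ℂ] 𝓗) :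
    hsNorm bas T = √((∑' i, ‖T (bas i)‖ₑ ^ 2).toReal) := by
  rw [hsNorm, ENNReal.tsum_toReal_eq (fun _ => by finiteness)]
  simp only [ENNReal.toReal_pow, toReal_enorm]

variable (bas) in
lemma hsNorm_star (T : 𝓗 →L[ℂ] 𝓗) : hsNorm bas (star T) = hsNorm bas T := by
  rw [hsNorm_eq_sqrt_toReal, hsNorm_eq_sqrt_toReal, tsum_enorm_sq_star]

lemma IsHS.star {T : 𝓗 →L[ℂ] 𝓗} (hT : IsHS bas T) : IsHS bas (star T) := by
  rwa [isHS_iff_tsum_enorm_sq_ne_top, tsum_enorm_sq_star, ← isHS_iff_tsum_enorm_sq_ne_top]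

variable (bas) in
lemma isHS_iff_memℓp {T : 𝓗 →L[ℂ] 𝓗} : IsHS bas T ↔ Memℓp (fun i => T (bas i)) 2 := by
  rw [memℓp_gen_iff (by norm_num), IsHS]
  norm_num

lemma IsHS.add {S T : 𝓗 →L[ℂ] 𝓗} (hS : IsHS bas S) (hT : IsHS bas T) : IsHS bas (S + T) :=
  (isHS_iff_memℓp bas).2 (((isHS_iff_memℓp bas).1 hS).add ((isHS_iff_memℓp bas).1 hT))

lemma IsHS.neg {T : 𝓗 →L[ℂ] 𝓗} (hT : IsHS bas T) : IsHS bas (-T) :=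
  (isHS_iff_memℓp bas).2 ((isHS_iff_memℓp bas).1 hT).neg

lemma IsHS.sub {S T : 𝓗 →L[ℂ] 𝓗} (hS : IsHS bas S) (hT : IsHS bas T) : IsHS bas (S - T) := by
  simpa only [sub_eq_add_neg] using hS.add hT.neg

lemma IsHS.finset_sum {σ : Type*} {s : Finset σ} {T : σ → 𝓗 →L[ℂ] 𝓗}
    (hT : ∀ x ∈ s, IsHS bas (T x)) : IsHS bas (∑ x ∈ s, T x) :=
  Finset.sum_induction T (IsHS bas) (fun _ _ => IsHS.add)
    ((isHS_iff_memℓp bas).2 zero_memℓp) hT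

lemma IsHS.mul_left {T : 𝓗 →L[ℂ] 𝓗} (S : 𝓗 →L[ℂ] 𝓗) (hT : IsHS bas T) : IsHS bas (S * T) :=
  Summable.of_nonneg_of_le (fun _ => by positivity) (fun i => norm_mul_apply_sq_le S T (bas i))
    (Summable.mul_left _ hT)

lemma IsHS.mul_right {T : 𝓗 →L[ℂ] 𝓗} (S : 𝓗 →L[ℂ] 𝓗) (hT : IsHS bas T) : IsHS bas (T * S) := by
  simpa [star_mul] using (hT.star.mul_left (Star.star S)).star

lemma IsHS.pow_sub_pow {a b : 𝓗 →L[ℂ] 𝓗} (hab : IsHS bas (a - b)) (k : ℕ) :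
    IsHS bas (a ^ k - b ^ k) := by
  rw [pow_sub_pow_eq_sum]
  exact IsHS.finset_sum fun j _ => (hab.mul_left _).mul_right _

variable (bas) in
lemma isHS_of_finiteDimensional_range (T : 𝓗 →L[ℂ] 𝓗)
    [FiniteDimensional ℂ (LinearMap.range (T : 𝓗 →ₗ[ℂ] 𝓗))] : IsHS bas T := by
  let w := stdOrthonormalBasis ℂ (LinearMap.range (T : 𝓗 →ₗ[ℂ] 𝓗))
  have key (i : ι) :
      ‖T (bas i)‖ ^ 2 = ∑ m, ‖inner ℂ (bas i) (adjoint T (w m))‖ ^ 2 := by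
    refine (w.sum_sq_norm_inner_right ⟨T (bas i), LinearMap.mem_range_self _ _⟩).symm.trans ?_
    refine Finset.sum_congr rfl fun m _ => ?_
    rw [← norm_inner_symm, adjoint_inner_right]
    rfl
  simp only [IsHS, key]
  exact summable_sum fun m _ => (bas.hasSum_norm_inner_sq _).summable

variable (bas) in
noncomputable def hsVec (T : 𝓗 →L[ℂ] 𝓗) (hT : IsHS bas T) : lp (fun _ : ι => 𝓗) 2 :=
  ⟨fun i => T (bas i), (isHS_iff_memℓp bas).1 hT⟩

@[simp] lemma hsVec_apply {T : 𝓗 →L[ℂ] 𝓗} (hT : IsHS bas T) (i : ι) :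
    hsVec bas T hT i = T (bas i) :=
  rfl

lemma hsVec_add {S T : 𝓗 →L[ℂ] 𝓗} (hS : IsHS bas S) (hT : IsHS bas T) :
    hsVec bas (S + T) (hS.add hT) = hsVec bas S hS + hsVec bas T hT :=
  rfl

lemma hsVec_sub {S T : 𝓗 →L[ℂ] 𝓗} (hS : IsHS bas S) (hT : IsHS bas T) :
    hsVec bas (S - T) (hS.sub hT) = hsVec bas S hS - hsVec bas T hT :=
  rfl

lemma hsNorm_eq_norm_hsVec {T : 𝓗 →L[ℂ] 𝓗} (hT : IsHS bas T) :
    hsNorm bas T = ‖hsVec bas T hT‖ := by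
  have h := lp.norm_rpow_eq_tsum (p := 2) (by norm_num) (hsVec bas T hT)
  norm_num at h
  rw [hsNorm, show ∑' i, ‖T (bas i)‖ ^ 2 = ‖hsVec bas T hT‖ ^ 2 from h.symm,
    Real.sqrt_sq (norm_nonneg _)]

variable (bas) in
lemma hsNorm_nonneg (T : 𝓗 →L[ℂ] 𝓗) : 0 ≤ hsNorm bas T := Real.sqrt_nonneg _

variable (bas) in
lemma hsNorm_neg (T : 𝓗 →L[ℂ] 𝓗) : hsNorm bas (-T) = hsNorm bas T := by
  simp [hsNorm]

lemma hsNorm_add_le {S T : 𝓗 →L[ℂ] 𝓗} (hS : IsHS bas S) (hT : IsHS bas T) :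
    hsNorm bas (S + T) ≤ hsNorm bas S + hsNorm bas T := by
  rw [hsNorm_eq_norm_hsVec hS, hsNorm_eq_norm_hsVec hT, hsNorm_eq_norm_hsVec (hS.add hT),
    hsVec_add]
  exact norm_add_le _ _

lemma hsNorm_mul_left_le (S : 𝓗 →L[ℂ] 𝓗) {T : 𝓗 →L[ℂ] 𝓗} (hT : IsHS bas T) :
    hsNorm bas (S * T) ≤ ‖S‖ * hsNorm bas T := by
  rw [hsNorm, hsNorm, ← Real.sqrt_sq (norm_nonneg S), ← Real.sqrt_mul (sq_nonneg _),
    ← tsum_mul_left]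
  exact Real.sqrt_le_sqrt <| (hT.mul_left S).tsum_le_tsum
    (fun i => norm_mul_apply_sq_le S T (bas i)) (Summable.mul_left _ hT)

lemma hsNorm_mul_right_le (S : 𝓗 →L[ℂ] 𝓗) {T : 𝓗 →L[ℂ] 𝓗} (hT : IsHS bas T) :
    hsNorm bas (T * S) ≤ hsNorm bas T * ‖S‖ := by
  rw [← hsNorm_star, star_mul, mul_comm, ← hsNorm_star bas T, ← norm_star S]
  exact hsNorm_mul_left_le _ hT.star

lemma hasSum_inner_mul_apply {S T : 𝓗 →L[ℂ] 𝓗} (hS : IsHS bas (star S)) (hT : IsHS bas T) :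
    HasSum (fun i => inner ℂ (bas i) ((S * T) (bas i)))
      (inner ℂ (hsVec bas (star S) hS) (hsVec bas T hT)) := by
  refine (lp.hasSum_inner _ _).congr_fun fun i => ?_
  rw [hsVec_apply, hsVec_apply, star_eq_adjoint, adjoint_inner_left]
  rfl

lemma traceAlong_mul {S T : 𝓗 →L[ℂ] 𝓗} (hS : IsHS bas (star S)) (hT : IsHS bas T) :
    traceAlong bas (S * T) = inner ℂ (hsVec bas (star S) hS) (hsVec bas T hT) :=
  (hasSum_inner_mul_apply hS hT).tsum_eq

lemma hasSum_traceAlong_mul {S T : 𝓗 →L[ℂ] 𝓗} (hS : IsHS bas (star S)) (hT : IsHS bas T) :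
    HasSum (fun i => inner ℂ (bas i) ((S * T) (bas i))) (traceAlong bas (S * T)) := by
  simpa only [traceAlong_mul hS hT] using hasSum_inner_mul_apply hS hT

variable (bas) in
/-- Each `E n` is required to be Hilbert–Schmidt since `hsNorm` is `0` off that class. -/
def HSTendstoZero (E : ℕ → 𝓗 →L[ℂ] 𝓗) : Prop :=
  (∀ n, IsHS bas (E n)) ∧ Tendsto (fun n => hsNorm bas (E n)) atTop (𝓝 0)

namespace HSTendstoZero

variable {E F : ℕ → 𝓗 →L[ℂ] 𝓗}

lemma congr (hE : HSTendstoZero bas E) (h : ∀ n, E n = F n) : HSTendstoZero bas F := by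
  rwa [← funext h]

lemma zero : HSTendstoZero bas (0 : ℕ → 𝓗 →L[ℂ] 𝓗) :=
  ⟨fun _ => (isHS_iff_memℓp bas).2 zero_memℓp, by simp [hsNorm]⟩

lemma add (hE : HSTendstoZero bas E) (hF : HSTendstoZero bas F) :
    HSTendstoZero bas fun n => E n + F n :=
  ⟨fun n => (hE.1 n).add (hF.1 n),
    squeeze_zero (fun _ => hsNorm_nonneg bas _) (fun n => hsNorm_add_le (hE.1 n) (hF.1 n))
      (by simpa using hE.2.add hF.2)⟩

lemma neg (hE : HSTendstoZero bas E) : HSTendstoZero bas fun n => -E n :=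
  ⟨fun n => (hE.1 n).neg, by simpa only [hsNorm_neg] using hE.2⟩

lemma sub (hE : HSTendstoZero bas E) (hF : HSTendstoZero bas F) :
    HSTendstoZero bas fun n => E n - F n := by
  simpa only [sub_eq_add_neg] using hE.add hF.neg

lemma star (hE : HSTendstoZero bas E) : HSTendstoZero bas fun n => star (E n) :=
  ⟨fun n => (hE.1 n).star, by simpa only [hsNorm_star] using hE.2⟩

lemma finset_sum {σ : Type*} {s : Finset σ} {E : σ → ℕ → 𝓗 →L[ℂ] 𝓗}
    (hE : ∀ x ∈ s, HSTendstoZero bas (E x)) : HSTendstoZero bas fun n => ∑ x ∈ s, E x n := by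
  simpa only [← Finset.sum_apply] using
    Finset.sum_induction E (HSTendstoZero bas) (fun _ _ => add) zero hE

lemma mul_left {C : ℕ → 𝓗 →L[ℂ] 𝓗} {M : ℝ} (hC : ∀ n, ‖C n‖ ≤ M) (hE : HSTendstoZero bas E) :
    HSTendstoZero bas fun n => C n * E n :=
  ⟨fun n => (hE.1 n).mul_left _,
    squeeze_zero (fun _ => hsNorm_nonneg bas _)
      (fun n => (hsNorm_mul_left_le _ (hE.1 n)).trans
        (mul_le_mul_of_nonneg_right (hC n) (hsNorm_nonneg bas _)))
      (by simpa using hE.2.const_mul M)⟩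

lemma mul_right {C : ℕ → 𝓗 →L[ℂ] 𝓗} {M : ℝ} (hC : ∀ n, ‖C n‖ ≤ M) (hE : HSTendstoZero bas E) :
    HSTendstoZero bas fun n => E n * C n :=
  ⟨fun n => (hE.1 n).mul_right _,
    squeeze_zero (fun _ => hsNorm_nonneg bas _)
      (fun n => (hsNorm_mul_right_le _ (hE.1 n)).trans
        (mul_le_mul_of_nonneg_left (hC n) (hsNorm_nonneg bas _)))
      (by simpa using hE.2.mul_const M)⟩

lemma mul_mul_sub {X V Y : ℕ → 𝓗 →L[ℂ] 𝓗} {x v y : 𝓗 →L[ℂ] 𝓗} {M : ℝ} (hY : ∀ n, ‖Y n‖ ≤ M)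
    (hXV : HSTendstoZero bas fun n => X n * V n - x * v)
    (hVY : HSTendstoZero bas fun n => V n * Y n - v * y)
    (hV : HSTendstoZero bas fun n => V n - v) :
    HSTendstoZero bas fun n => X n * V n * Y n - x * v * y :=
  (((hXV.mul_right hY).add (hVY.mul_left fun _ => le_rfl)).sub
    ((hV.mul_right hY).mul_left fun _ => le_rfl)).congr fun _ => by noncomm_ring

lemma pow_sub_pow {A B : ℕ → 𝓗 →L[ℂ] 𝓗} {a b : 𝓗 →L[ℂ] 𝓗} {M : ℝ}
    (hB : ∀ n, ‖B n‖ ≤ M)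
    (hleft : ∀ m, HSTendstoZero bas fun n => A n ^ m * (A n - B n) - a ^ m * (a - b))
    (hright : ∀ j, HSTendstoZero bas fun n => (A n - B n) * B n ^ j - (a - b) * b ^ j)
    (k : ℕ) : HSTendstoZero bas fun n => (A n ^ k - B n ^ k) - (a ^ k - b ^ k) := by
  have hdiff : HSTendstoZero bas fun n => A n - B n - (a - b) := by
    simpa only [pow_zero, mul_one] using hright 0
  have hterm (j : ℕ) : HSTendstoZero bas fun n =>
      A n ^ (k - 1 - j) * (A n - B n) * B n ^ j - a ^ (k - 1 - j) * (a - b) * b ^ j :=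
    (hleft _).mul_mul_sub (fun n => norm_pow_le_of_norm_le (hB n) j) (hright j) hdiff
  refine (finset_sum (s := Finset.range k) fun j _ => hterm j).congr fun n => ?_
  rw [pow_sub_pow_eq_sum, pow_sub_pow_eq_sum, ← Finset.sum_sub_distrib]

variable {P : ℕ → 𝓗 →L[ℂ] 𝓗}

lemma compress_sub {V : 𝓗 →L[ℂ] 𝓗} (hP : ∀ n, IsStarProjection (P n))
    (hQV : HSTendstoZero bas fun n => (1 - P n) * V)
    (hVQ : HSTendstoZero bas fun n => V * (1 - P n)) :
    HSTendstoZero bas fun n => P n * V * P n - V :=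
  ((hVQ.mul_left fun n => (hP n).norm_le (P n)).neg.sub hQV).congr fun _ => by noncomm_ring

lemma one_sub_mul_pow_mul {B V : 𝓗 →L[ℂ] 𝓗} (hP : ∀ n, IsStarProjection (P n))
    (hB : HSTendstoZero bas fun n => (1 - P n) * B * P n)
    (hQV : HSTendstoZero bas fun n => (1 - P n) * V) (j : ℕ) :
    HSTendstoZero bas fun n => (1 - P n) * B ^ j * V := by
  induction j with
  | zero => exact hQV.congr fun n => by rw [pow_zero, mul_one]
  | succ m ih =>
    refine ((hB.mul_right (C := fun _ => B ^ m * V) fun _ => le_rfl).add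
      (ih.mul_left fun n => (hP n).one_sub.norm_mul_le B)).congr fun n => ?_
    rw [pow_succ']
    noncomm_ring

lemma compress_pow_mul_sub {B V : 𝓗 →L[ℂ] 𝓗} (hP : ∀ n, IsStarProjection (P n))
    (hB : HSTendstoZero bas fun n => (1 - P n) * B * P n)
    (hQV : HSTendstoZero bas fun n => (1 - P n) * V)
    (hV : HSTendstoZero bas fun n => P n * V * P n - V) (j : ℕ) :
    HSTendstoZero bas fun n => (P n * B * P n) ^ j * (P n * V * P n) - B ^ j * V := by
  induction j with
  | zero => exact hV.congr fun n => by rw [pow_zero, pow_zero, one_mul, one_mul]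
  | succ m ih =>
    refine (((ih.mul_left fun n => (hP n).norm_mul_mul_le B).sub
      ((one_sub_mul_pow_mul hP hB hQV m).mul_left fun n => (hP n).norm_mul_le B)).sub
      (one_sub_mul_pow_mul hP hB hQV (m + 1))).congr fun n => ?_
    rw [pow_succ', pow_succ']
    noncomm_ring

end HSTendstoZero

lemma tendsto_hsVec {E : ℕ → 𝓗 →L[ℂ] 𝓗} {G : 𝓗 →L[ℂ] 𝓗} (hE : ∀ n, IsHS bas (E n))
    (hG : IsHS bas G) (h : HSTendstoZero bas fun n => E n - G) :
    Tendsto (fun n => hsVec bas (E n) (hE n)) atTop (𝓝 (hsVec bas G hG)) := by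
  rw [tendsto_iff_norm_sub_tendsto_zero]
  exact h.2.congr fun n => by rw [hsNorm_eq_norm_hsVec ((hE n).sub hG), hsVec_sub]

lemma tendsto_traceAlong_mul {S T : ℕ → 𝓗 →L[ℂ] 𝓗} {S₀ T₀ : 𝓗 →L[ℂ] 𝓗} (hS₀ : IsHS bas S₀)
    (hT₀ : IsHS bas T₀) (hS : HSTendstoZero bas fun n => S n - S₀)
    (hT : HSTendstoZero bas fun n => T n - T₀) :
    Tendsto (fun n => traceAlong bas (S n * T n)) atTop (𝓝 (traceAlong bas (S₀ * T₀))) := by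
  have hSn (n : ℕ) : IsHS bas (star (S n)) := by simpa using ((hS.1 n).add hS₀).star
  have hTn (n : ℕ) : IsHS bas (T n) := by simpa using (hT.1 n).add hT₀
  simp only [traceAlong_mul (hSn _) (hTn _), traceAlong_mul hS₀.star hT₀]
  refine Tendsto.inner (tendsto_hsVec hSn hS₀.star ?_) (tendsto_hsVec hTn hT₀ hT)
  exact hS.star.congr fun n => star_sub _ _

lemma aeval_sub_aeval_sub_polyDeriv (p : Polynomial ℂ) (a b : 𝓗 →L[ℂ] 𝓗) :
    Polynomial.aeval a p - Polynomial.aeval b p - polyDeriv p b (a - b)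
      = ∑ r ∈ p.support, p.coeff r • ∑ j ∈ Finset.range r,
          (a ^ (r - 1 - j) - b ^ (r - 1 - j)) * ((a - b) * b ^ j) := by
  simp only [Polynomial.aeval_eq_sum_support, polyDeriv, ← Finset.sum_sub_distrib, ← smul_sub]
  refine Finset.sum_congr rfl fun r _ => congrArg _ ?_
  rw [pow_sub_pow_eq_sum a b r, ← Finset.sum_sub_distrib]
  refine Finset.sum_congr rfl fun j _ => ?_
  rw [Nat.sub_right_comm]
  noncomm_ring

lemma IsIdempotentElem.mul_aeval_sub_aeval_sub_polyDeriv_mul {e : 𝓗 →L[ℂ] 𝓗}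
    (he : IsIdempotentElem e) (p : Polynomial ℂ) (a b : 𝓗 →L[ℂ] 𝓗) :
    e * (Polynomial.aeval (e * a * e) p - Polynomial.aeval (e * b * e) p
        - polyDeriv p (e * b * e) (e * a * e - e * b * e)) * e
      = Polynomial.aeval (e * a * e) p - Polynomial.aeval (e * b * e) p
        - polyDeriv p (e * b * e) (e * a * e - e * b * e) := by
  have hl (c : 𝓗 →L[ℂ] 𝓗) : e * (e * c * e) = e * c * e := by
    rw [← mul_assoc, ← mul_assoc, he.eq]
  have hr (c : 𝓗 →L[ℂ] 𝓗) : e * c * e * e = e * c * e := by rw [mul_assoc, he.eq]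
  simp only [aeval_sub_aeval_sub_polyDeriv, Finset.mul_sum, Finset.sum_mul, mul_smul_comm,
    smul_mul_assoc, mul_pow_sub_pow_mul_mul_pow_mul (hl a) (hr a) (hl b) (hr b)]

lemma traceAlong_aeval_sub_aeval_sub_polyDeriv {a b : 𝓗 →L[ℂ] 𝓗} (hab : IsHS bas (a - b))
    (p : Polynomial ℂ) :
    traceAlong bas (Polynomial.aeval a p - Polynomial.aeval b p - polyDeriv p b (a - b))
      = ∑ r ∈ p.support, p.coeff r * ∑ j ∈ Finset.range r,
          traceAlong bas ((a ^ (r - 1 - j) - b ^ (r - 1 - j)) * ((a - b) * b ^ j)) := by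
  rw [aeval_sub_aeval_sub_polyDeriv]
  refine HasSum.tsum_eq ?_
  simp only [sum_apply, smul_apply, inner_sum, inner_smul_right]
  exact hasSum_sum fun r _ => (hasSum_sum fun j _ =>
    hasSum_traceAlong_mul (hab.pow_sub_pow _).star (hab.mul_right _)).mul_left _

lemma tendsto_traceAlong_aeval_sub_aeval_sub_polyDeriv {A B : ℕ → 𝓗 →L[ℂ] 𝓗}
    {a b : 𝓗 →L[ℂ] 𝓗} (hab : IsHS bas (a - b))
    (hpow : ∀ k, HSTendstoZero bas fun n => (A n ^ k - B n ^ k) - (a ^ k - b ^ k))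
    (hmul : ∀ j, HSTendstoZero bas fun n => (A n - B n) * B n ^ j - (a - b) * b ^ j)
    (p : Polynomial ℂ) :
    Tendsto (fun n => traceAlong bas
        (Polynomial.aeval (A n) p - Polynomial.aeval (B n) p - polyDeriv p (B n) (A n - B n)))
      atTop (𝓝 (traceAlong bas
        (Polynomial.aeval a p - Polynomial.aeval b p - polyDeriv p b (a - b)))) := by
  have hAB (n : ℕ) : IsHS bas (A n - B n) := by simpa using ((hmul 0).1 n).add hab
  simp only [traceAlong_aeval_sub_aeval_sub_polyDeriv (hAB _),
    traceAlong_aeval_sub_aeval_sub_polyDeriv hab]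
  exact tendsto_finsetSum _ fun r _ => (tendsto_finsetSum _ fun j _ =>
    tendsto_traceAlong_mul (hab.pow_sub_pow _) (hab.mul_right _) (hpow _) (hmul j)).const_mul _

end HilbertSchmidt

/-- Reduction to finite dimensions for polynomials: for bounded self-adjoint
`H₀, H = H₀ + V` with `V` Hilbert–Schmidt, and finite-rank orthogonal projections `Pₙ` with
`‖(I−Pₙ)H₀Pₙ‖₂ → 0`, `‖(I−Pₙ)HPₙ‖₂ → 0`, `‖(I−Pₙ)V‖₂ → 0`, one has for every polynomial `p`:
`Tr(p(H) − p(H₀) − Dp(H₀)·V)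
  = limₙ Tr(Pₙ[p(PₙHPₙ) − p(PₙH₀Pₙ) − Dp(PₙH₀Pₙ)·(PₙVPₙ)]Pₙ)`. -/
theorem stmt_17 {𝓗 : Type*} [NormedAddCommGroup 𝓗] [InnerProductSpace ℂ 𝓗] [CompleteSpace 𝓗]
    {ι : Type*} (bas : HilbertBasis ι ℂ 𝓗)
    (H₀ V H : 𝓗 →L[ℂ] 𝓗) (hH₀ : IsSelfAdjoint H₀) (hH : IsSelfAdjoint H)
    (hV : V = H - H₀) (hVHS : IsHS bas V)
    (P : ℕ → (𝓗 →L[ℂ] 𝓗))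
    (hProj : ∀ n, IsIdempotentElem (P n) ∧ IsSelfAdjoint (P n) ∧
      FiniteDimensional ℂ (LinearMap.range (P n : 𝓗 →ₗ[ℂ] 𝓗)))
    (h1 : Filter.Tendsto (fun n => hsNorm bas (((1 : 𝓗 →L[ℂ] 𝓗) - P n) * H₀ * P n))
      Filter.atTop (nhds 0))
    (h2 : Filter.Tendsto (fun n => hsNorm bas (((1 : 𝓗 →L[ℂ] 𝓗) - P n) * H * P n))
      Filter.atTop (nhds 0))
    (h3 : Filter.Tendsto (fun n => hsNorm bas (((1 : 𝓗 →L[ℂ] 𝓗) - P n) * V))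
      Filter.atTop (nhds 0))
    (p : Polynomial ℂ) :
    Filter.Tendsto
      (fun n => traceAlong bas (P n *
        (Polynomial.aeval (P n * H * P n) p - Polynomial.aeval (P n * H₀ * P n) p -
          polyDeriv p (P n * H₀ * P n) (P n * V * P n)) * P n))
      Filter.atTop
      (nhds (traceAlong bas
        (Polynomial.aeval H p - Polynomial.aeval H₀ p - polyDeriv p H₀ V))) := by
  have hP (n : ℕ) : IsStarProjection (P n) := ⟨(hProj n).1, (hProj n).2.1⟩
  have hPHS (n : ℕ) : IsHS bas (P n) :=
    haveI := (hProj n).2.2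
    isHS_of_finiteDimensional_range bas (P n)
  have hVsa : IsSelfAdjoint V := hV ▸ hH.sub hH₀
  have hQV : HSTendstoZero bas fun n => (1 - P n) * V := ⟨fun n => hVHS.mul_left _, h3⟩
  have hPVP : HSTendstoZero bas fun n => P n * V * P n - V :=
    hQV.compress_sub hP <| hQV.star.congr fun n => by
      rw [star_mul, hVsa.star_eq, star_sub, star_one, (hP n).isSelfAdjoint.star_eq]
  have hleft := HSTendstoZero.compress_pow_mul_sub hP ⟨fun n => (hPHS n).mul_left _, h2⟩ hQV hPVP
  have hright (j : ℕ) :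
      HSTendstoZero bas fun n => P n * V * P n * (P n * H₀ * P n) ^ j - V * H₀ ^ j :=
    (HSTendstoZero.compress_pow_mul_sub hP ⟨fun n => (hPHS n).mul_left _, h1⟩ hQV hPVP j).star
      |>.congr fun n => by simp only [star_sub, star_mul, star_pow, hVsa.star_eq, hH₀.star_eq,
        (hP n).isSelfAdjoint.star_eq, mul_assoc]
  have hVcompress (n : ℕ) : P n * V * P n = P n * H * P n - P n * H₀ * P n := by
    rw [hV]
    noncomm_ring
  have hPabsorb (n : ℕ) := (hProj n).1.mul_aeval_sub_aeval_sub_polyDeriv_mul p H H₀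
  simp only [hVcompress] at hleft hright ⊢
  simp only [hPabsorb]
  subst hV
  exact tendsto_traceAlong_aeval_sub_aeval_sub_polyDeriv hVHS
    (HSTendstoZero.pow_sub_pow (fun n => (hP n).norm_mul_mul_le H₀) hleft hright) hright p
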